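/- Let p ∈ (1, ∞), ρ ∈ (0, (u−1)/u) where u = min{2, p}, and set N_n = ⌊2^{n^ρ}⌋. Suppose (Y_N : N ∈ ℕ) is a family of operators on ℓ^p(ℤ^d) satisfying ‖∑_{N=N_n}^{N_{n+1}−1} |Y_{N+1}f − Y_N f|‖_{ℓ^p} ≤ C_ρ n^{ρ−1} ‖f‖_{ℓ^p} for all n ≥ 1. Then for every r ∈ (2, ∞), the short variation satisfies ‖(∑_{n ≥ 0} V_r(Y_N f : N ∈ [N_n, N_{n+1}))^r)^{1/r}‖_{ℓ^p} ≤ C ‖f‖_{ℓ^p} with C independent of r and f. -/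

import Mathlib

open scoped ENNReal

/-- The `r`-variational seminorm of `a : ℕ → ℂ` over the index set `A ⊆ ℕ`. -/
noncomputable def variationSeminorm (r : ℝ) (a : ℕ → ℂ) (A : Set ℕ) : ℝ≥0∞ :=
  ⨆ (J : ℕ) (k : Fin (J + 1) → ℕ) (_ : StrictMono k) (_ : ∀ j, k j ∈ A),
    (∑ j : Fin J, ENNReal.ofReal (‖a (k j.succ) - a (k j.castSucc)‖ ^ r)) ^ (1 / r)

/-- The `ℓ^p(ℤ^d)` norm. -/
noncomputable def lpNorm (p : ℝ) {d : ℕ} (f : (Fin d → ℤ) → ℂ) : ℝ≥0∞ :=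
  (∑' x : Fin d → ℤ, ENNReal.ofReal (‖f x‖ ^ p)) ^ (1 / p)

/-- `N_n = ⌊2^{n^ρ}⌋`. -/
noncomputable def Nseq (ρ : ℝ) (n : ℕ) : ℕ := Nat.floor ((2 : ℝ) ^ ((n : ℝ) ^ ρ))

/-! On each block `[N_n, N_{n+1})` the `r`-variation is at most the `1`-variation, i.e. at most the
sum of the consecutive increments, and the block `n = 0` is the single point `1`. Since
`ℓ^u ⊆ ℓ^r`, pointwise in `x` the `ℓ^r` norm over blocks is bounded by the `ℓ^u` norm of these block
sums. Raising to the power `u` and applying Minkowski's inequality in `ℓ^{p/u}` moves the `ℓ^u` sum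
over blocks outside the `ℓ^p` norm, and the hypothesis bounds what is left by
`C_ρ ‖f‖_p (∑_{n ≥ 1} n^{u(ρ-1)})^{1/u}`, finite because `u(ρ-1) < -1`. -/

namespace ENNReal

theorem iSup_rpow {ι : Type*} (F : ι → ℝ≥0∞) {c : ℝ} (hc : 0 < c) :
    (⨆ i, F i) ^ c = ⨆ i, F i ^ c :=
  (orderIsoRpow c hc).map_iSup F

theorem tsum_iSup_of_monotone {ι κ : Type*} [Preorder κ] [IsDirectedOrder κ]
    (H : κ → ι → ℝ≥0∞) (hH : ∀ i, Monotone fun k => H k i) :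
    ∑' i, ⨆ k, H k i = ⨆ k, ∑' i, H k i := by
  refine le_antisymm ?_ (iSup_le fun k => ENNReal.tsum_le_tsum fun i => le_iSup (H · i) k)
  rw [ENNReal.tsum_eq_iSup_sum]
  refine iSup_le fun s => ?_
  rw [ENNReal.finsetSum_iSup_of_monotone hH]
  exact iSup_mono fun k => ENNReal.sum_le_tsum s

theorem tsum_rpow_le_rpow_tsum {ι : Type*} (b : ι → ℝ≥0∞) {t : ℝ} (ht : 1 ≤ t) :
    ∑' i, b i ^ t ≤ (∑' i, b i) ^ t := by
  have hsplit (x : ℝ≥0∞) : x ^ t = x * x ^ (t - 1) := by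
    simpa using ENNReal.rpow_add_of_nonneg (x := x) 1 (t - 1) zero_le_one (by linarith)
  calc ∑' i, b i ^ t = ∑' i, b i * b i ^ (t - 1) := by simp only [hsplit]
    _ ≤ ∑' i, b i * (∑' j, b j) ^ (t - 1) := by
      gcongr with i
      exact ENNReal.le_tsum i
    _ = (∑' i, b i) ^ t := by rw [ENNReal.tsum_mul_right, hsplit]

end ENNReal

noncomputable def tsumLpNorm {ι : Type*} (q : ℝ) (F : ι → ℝ≥0∞) : ℝ≥0∞ :=
  (∑' i, F i ^ q) ^ (1 / q)

section tsumLpNorm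

variable {ι : Type*}

theorem tsumLpNorm_zero {q : ℝ} (hq : 0 < q) : tsumLpNorm q (0 : ι → ℝ≥0∞) = 0 := by
  simp [tsumLpNorm, hq]

theorem tsumLpNorm_mono {q : ℝ} (hq : 0 ≤ q) {F G : ι → ℝ≥0∞} (h : ∀ i, F i ≤ G i) :
    tsumLpNorm q F ≤ tsumLpNorm q G := by
  unfold tsumLpNorm
  gcongr with i
  exact h i

theorem tsumLpNorm_one (F : ι → ℝ≥0∞) : tsumLpNorm 1 F = ∑' i, F i := by
  simp [tsumLpNorm]

theorem tsumLpNorm_const_mul {q : ℝ} (hq : 0 < q) (c : ℝ≥0∞) (F : ι → ℝ≥0∞) :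
    tsumLpNorm q (fun i => c * F i) = c * tsumLpNorm q F := by
  simp only [tsumLpNorm, ENNReal.mul_rpow_of_nonneg _ _ hq.le, ENNReal.tsum_mul_left]
  rw [ENNReal.mul_rpow_of_nonneg _ _ (one_div_pos.mpr hq).le, one_div,
    ENNReal.rpow_rpow_inv hq.ne']

theorem tsumLpNorm_rpow {q u : ℝ} (hu : u ≠ 0) (F : ι → ℝ≥0∞) :
    tsumLpNorm (q / u) (fun i => F i ^ u) = tsumLpNorm q F ^ u := by
  simp only [tsumLpNorm, ← ENNReal.rpow_mul, mul_div_cancel₀ q hu, one_div_div, one_div_mul_eq_div]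

theorem tsumLpNorm_le_of_exponent_le {u r : ℝ} (hu : 0 < u) (hur : u ≤ r) (F : ι → ℝ≥0∞) :
    tsumLpNorm r F ≤ tsumLpNorm u F := by
  have hr : 0 < r := hu.trans_le hur
  have key : ∑' i, F i ^ r ≤ (∑' i, F i ^ u) ^ (r / u) := by
    simpa only [← ENNReal.rpow_mul, mul_div_cancel₀ r hu.ne'] using
      ENNReal.tsum_rpow_le_rpow_tsum (fun i => F i ^ u) ((one_le_div hu).mpr hur)
  calc tsumLpNorm r F ≤ ((∑' i, F i ^ u) ^ (r / u)) ^ (1 / r) := by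
        unfold tsumLpNorm; gcongr
    _ = tsumLpNorm u F := by
        rw [tsumLpNorm, ← ENNReal.rpow_mul]
        congr 1
        field_simp

theorem tsumLpNorm_iSup_of_monotone {q : ℝ} (hq : 0 < q) {G : ℕ → ι → ℝ≥0∞}
    (hG : Monotone G) : tsumLpNorm q (fun i => ⨆ k, G k i) = ⨆ k, tsumLpNorm q (G k) := by
  simp only [tsumLpNorm, ENNReal.iSup_rpow _ hq]
  rw [ENNReal.tsum_iSup_of_monotone _ fun i _ _ hkl =>
    ENNReal.rpow_le_rpow (hG hkl i) hq.le,
    ENNReal.iSup_rpow _ (by positivity)]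

theorem tsumLpNorm_add_le {q : ℝ} (hq : 1 ≤ q) (F G : ι → ℝ≥0∞) :
    tsumLpNorm q (F + G) ≤ tsumLpNorm q F + tsumLpNorm q G := by
  rw [tsumLpNorm, ENNReal.tsum_eq_iSup_sum, ENNReal.iSup_rpow _ (by positivity)]
  refine iSup_le fun s => (ENNReal.Lp_add_le s F G hq).trans ?_
  unfold tsumLpNorm
  gcongr <;> exact ENNReal.sum_le_tsum s

theorem tsumLpNorm_tsum_le {q : ℝ} (hq : 1 ≤ q) (g : ℕ → ι → ℝ≥0∞) :
    tsumLpNorm q (fun i => ∑' n, g n i) ≤ ∑' n, tsumLpNorm q (g n) := by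
  have hq0 : 0 < q := zero_lt_one.trans_le hq
  have hmono : Monotone fun K => ∑ n ∈ Finset.range K, g n := fun K L hKL =>
    Finset.sum_le_sum_of_subset (Finset.range_subset_range.mpr hKL)
  calc tsumLpNorm q (fun i => ∑' n, g n i)
      = ⨆ K, tsumLpNorm q (∑ n ∈ Finset.range K, g n) := by
        rw [← tsumLpNorm_iSup_of_monotone hq0 hmono]
        simp only [Finset.sum_apply, ENNReal.tsum_eq_iSup_nat]
    _ ≤ ⨆ K, ∑ n ∈ Finset.range K, tsumLpNorm q (g n) :=
        iSup_mono fun K => Finset.le_sum_of_subadditive _ (tsumLpNorm_zero hq0).le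
          (tsumLpNorm_add_le hq) _ _
    _ = ∑' n, tsumLpNorm q (g n) := ENNReal.tsum_eq_iSup_nat.symm

theorem tsumLpNorm_tsumLpNorm_le {u p : ℝ} (hu : 0 < u) (hup : u ≤ p) (g : ℕ → ι → ℝ≥0∞) :
    tsumLpNorm p (fun x => tsumLpNorm u (fun n => g n x)) ≤
      tsumLpNorm u (fun n => tsumLpNorm p (g n)) := by
  have hpow (S : ℝ≥0∞) : (S ^ (1 / u)) ^ u = S := by
    rw [one_div, ENNReal.rpow_inv_rpow hu.ne']
  rw [← ENNReal.rpow_le_rpow_iff hu, ← tsumLpNorm_rpow hu.ne']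
  calc tsumLpNorm (p / u) (fun x => tsumLpNorm u (fun n => g n x) ^ u)
      = tsumLpNorm (p / u) (fun x => ∑' n, g n x ^ u) := by simp only [tsumLpNorm, hpow]
    _ ≤ ∑' n, tsumLpNorm (p / u) (fun x => g n x ^ u) :=
        tsumLpNorm_tsum_le ((one_le_div hu).mpr hup) _
    _ = tsumLpNorm u (fun n => tsumLpNorm p (g n)) ^ u := by
        simp only [tsumLpNorm_rpow hu.ne']
        rw [tsumLpNorm, hpow]

end tsumLpNorm

theorem sum_edist_le_sum_Ico_edist {α : Type*} [PseudoEMetricSpace α] (a : ℕ → α) :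
    ∀ {J : ℕ} {k : Fin (J + 1) → ℕ}, Monotone k →
      ∑ j : Fin J, edist (a (k j.castSucc)) (a (k j.succ)) ≤
        ∑ i ∈ Finset.Ico (k 0) (k (Fin.last J)), edist (a i) (a (i + 1))
  | 0, _, _ => by simp
  | J + 1, k, hk => by
    rw [Fin.sum_univ_castSucc, ← Fin.succ_last, ← Finset.sum_Ico_consecutive _
      (hk (Fin.zero_le (Fin.last J).castSucc)) (hk (Fin.castSucc_le_succ (Fin.last J)))]
    gcongr
    · exact sum_edist_le_sum_Ico_edist a (hk.comp Fin.strictMono_castSucc.monotone)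
    · exact edist_le_Ico_sum_edist a (hk (Fin.castSucc_le_succ _))

theorem variationSeminorm_le_sum_Ico {r : ℝ} (hr : 1 ≤ r) (a : ℕ → ℂ) (M M' : ℕ) :
    variationSeminorm r a (Set.Ico M M') ≤
      ∑ N ∈ Finset.Ico M M', ENNReal.ofReal ‖a (N + 1) - a N‖ := by
  have hr0 : 0 < r := zero_lt_one.trans_le hr
  refine iSup₂_le fun J k => iSup₂_le fun hk hkA => ?_
  have hedist (z w : ℂ) : ENNReal.ofReal (‖z - w‖ ^ r) = edist w z ^ r := by
    rw [edist_comm, edist_dist, dist_eq_norm, ENNReal.ofReal_rpow_of_nonneg (norm_nonneg _) hr0.le]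
  simp only [hedist]
  have h0 := hkA 0
  have hlast := hkA (Fin.last J)
  rw [Set.mem_Ico] at h0 hlast
  calc (∑ j : Fin J, edist (a (k j.castSucc)) (a (k j.succ)) ^ r) ^ (1 / r)
      ≤ ∑ j : Fin J, edist (a (k j.castSucc)) (a (k j.succ)) := by
        have := tsumLpNorm_le_of_exponent_le zero_lt_one hr
          fun j : Fin J => edist (a (k j.castSucc)) (a (k j.succ))
        rwa [tsumLpNorm_one, tsumLpNorm, tsum_fintype, tsum_fintype] at this
    _ ≤ ∑ i ∈ Finset.Ico (k 0) (k (Fin.last J)), edist (a i) (a (i + 1)) :=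
        sum_edist_le_sum_Ico_edist a hk.monotone
    _ ≤ ∑ i ∈ Finset.Ico M M', edist (a i) (a (i + 1)) :=
        Finset.sum_le_sum_of_subset (Finset.Ico_subset_Ico h0.1 hlast.2.le)
    _ = ∑ N ∈ Finset.Ico M M', ENNReal.ofReal ‖a (N + 1) - a N‖ := by
        refine Finset.sum_congr rfl fun N _ => ?_
        rw [edist_comm, edist_dist, dist_eq_norm]

theorem variationSeminorm_of_subsingleton {r : ℝ} (hr : 0 < r) (a : ℕ → ℂ) {A : Set ℕ}
    (hA : A.Subsingleton) : variationSeminorm r a A = 0 := by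
  refine le_antisymm (iSup₂_le fun J k => iSup₂_le fun hk hkA => ?_) zero_le
  cases J with
  | zero => simp [hr]
  | succ J =>
    exact absurd (hA (hkA 0) (hkA (Fin.last _))) (hk (Fin.last_pos)).ne

theorem tsumLpNorm_natCast_succ_rpow_ne_top {u s : ℝ} (hu : 0 < u) (hs : s * u < -1) :
    tsumLpNorm u (fun n : ℕ => ((n + 1 : ℕ) : ℝ≥0∞) ^ s) ≠ ⊤ := by
  refine ENNReal.rpow_ne_top_of_nonneg (by positivity) ?_
  have hcoe (n : ℕ) :
      (((n + 1 : ℕ) : ℝ≥0∞) ^ s) ^ u = ((((n + 1 : ℕ) : NNReal) ^ (s * u) : NNReal) : ℝ≥0∞) := by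
    rw [← ENNReal.rpow_mul, ENNReal.coe_rpow_of_ne_zero (by positivity), ENNReal.coe_natCast]
  simp only [hcoe, ENNReal.tsum_coe_ne_top_iff_summable]
  exact (NNReal.summable_nat_add_iff 1).mpr (NNReal.summable_rpow.mpr hs)

theorem one_le_Nseq (ρ : ℝ) (n : ℕ) : 1 ≤ Nseq ρ n :=
  Nat.le_floor (by exact_mod_cast Real.one_le_rpow one_le_two (by positivity))

theorem Nseq_one (ρ : ℝ) : Nseq ρ 1 = 2 := by
  simp [Nseq]

theorem subsingleton_Ico_Nseq_zero_one (ρ : ℝ) : (Set.Ico (Nseq ρ 0) (Nseq ρ 1)).Subsingleton := by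
  intro x hx y hy
  rw [Set.mem_Ico, Nseq_one] at hx hy
  have := one_le_Nseq ρ 0
  omega

theorem tsumLpNorm_variationSeminorm_Nseq_le {r : ℝ} (hr : 1 ≤ r) (ρ : ℝ) (a : ℕ → ℂ) :
    tsumLpNorm r (fun n => variationSeminorm r a (Set.Ico (Nseq ρ n) (Nseq ρ (n + 1)))) ≤
      tsumLpNorm r (fun n => ∑ N ∈ Finset.Ico (Nseq ρ (n + 1)) (Nseq ρ (n + 1 + 1)),
        ENNReal.ofReal ‖a (N + 1) - a N‖) := by
  have hr0 : 0 < r := zero_lt_one.trans_le hr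
  rw [tsumLpNorm, tsum_eq_zero_add' ENNReal.summable,
    variationSeminorm_of_subsingleton hr0 a (subsingleton_Ico_Nseq_zero_one ρ),
    ENNReal.zero_rpow_of_pos hr0, zero_add]
  exact tsumLpNorm_mono hr0.le fun n => variationSeminorm_le_sum_Ico hr a _ _

theorem short_variation_estimate (d : ℕ) (p : ℝ) (hp : 1 < p)
    (ρ : ℝ) (hρ : ρ < (min 2 p - 1) / min 2 p)
    (Y : ℕ → ((Fin d → ℤ) → ℂ) → ((Fin d → ℤ) → ℂ))
    (Cρ : ℝ≥0∞) (hCρ : Cρ ≠ ⊤)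
    (hY : ∀ f : (Fin d → ℤ) → ℂ, ∀ n : ℕ, 1 ≤ n →
      (∑' x : Fin d → ℤ,
          (∑ N ∈ Finset.Ico (Nseq ρ n) (Nseq ρ (n + 1)),
            ENNReal.ofReal ‖Y (N + 1) f x - Y N f x‖) ^ p) ^ (1 / p)
        ≤ Cρ * (n : ℝ≥0∞) ^ (ρ - 1) * lpNorm p f) :
    ∃ C : ℝ≥0∞, C ≠ ⊤ ∧ ∀ r : ℝ, 2 < r → ∀ f : (Fin d → ℤ) → ℂ,
      (∑' x : Fin d → ℤ,
          (∑' n : ℕ,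
            variationSeminorm r (fun N => Y N f x)
              (Set.Ico (Nseq ρ n) (Nseq ρ (n + 1))) ^ r) ^ (p / r)) ^ (1 / p)
        ≤ C * lpNorm p f := by
  set u := min 2 p
  have hu : 1 < u := lt_min one_lt_two hp
  have hexp : (ρ - 1) * u < -1 := by
    have := (lt_div_iff₀ (by linarith)).mp hρ
    linarith
  refine ⟨Cρ * tsumLpNorm u (fun n : ℕ => ((n + 1 : ℕ) : ℝ≥0∞) ^ (ρ - 1)),
    ENNReal.mul_ne_top hCρ (tsumLpNorm_natCast_succ_rpow_ne_top (by linarith) hexp),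
    fun r hr f => ?_⟩
  set Δ : ℕ → (Fin d → ℤ) → ℝ≥0∞ := fun n x =>
    ∑ N ∈ Finset.Ico (Nseq ρ (n + 1)) (Nseq ρ (n + 1 + 1)), ENNReal.ofReal ‖Y (N + 1) f x - Y N f x‖
  calc _ = tsumLpNorm p (fun x => tsumLpNorm r
          (fun n => variationSeminorm r (Y · f x) (Set.Ico (Nseq ρ n) (Nseq ρ (n + 1))))) := by
        simp only [tsumLpNorm, ← ENNReal.rpow_mul, one_div_mul_eq_div]
    _ ≤ tsumLpNorm p (fun x => tsumLpNorm u (Δ · x)) :=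
        tsumLpNorm_mono (by linarith) fun x =>
          (tsumLpNorm_variationSeminorm_Nseq_le (by linarith) ρ _).trans
            (tsumLpNorm_le_of_exponent_le (by linarith) (by linarith [min_le_left 2 p]) _)
    _ ≤ tsumLpNorm u (fun n => tsumLpNorm p (Δ n)) :=
        tsumLpNorm_tsumLpNorm_le (by linarith) (min_le_right 2 p) Δ
    _ ≤ tsumLpNorm u (fun n => (Cρ * lpNorm p f) * ((n + 1 : ℕ) : ℝ≥0∞) ^ (ρ - 1)) :=
        tsumLpNorm_mono (by linarith) fun n => (hY f (n + 1) n.succ_pos).trans_eq (by ring)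
    _ = _ := by rw [tsumLpNorm_const_mul (by linarith)]; ring
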